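/- If a bipartite graph G has a 2-layer drawing with no (k+1)-crossing, then G has an orientation in which every vertex has outdegree at most k. -/

import Mathlib

open SimpleGraph

/-- `{A, B}` is a bipartition of the graph `G`. -/
def IsBipartition {V : Type*} (G : SimpleGraph V) (A B : Set V) : Prop :=
  Disjoint A B ∧ A ∪ B = Set.univ ∧
    ∀ ⦃u v⦄, G.Adj u v → (u ∈ A ∧ v ∈ B) ∨ (u ∈ B ∧ v ∈ A)

/-- `x` assigns distinct x-coordinates to the vertices within each layer,
giving a valid 2-layer drawing (vertices of `A` on the line `y = 0`,
vertices of `B` on the line `y = 1`). -/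
def IsTwoLayerDrawing {V : Type*} (A B : Set V) (x : V → ℝ) : Prop :=
  Set.InjOn x A ∧ Set.InjOn x B

/-- `e` is an edge of `G`, recorded with its `A`-endpoint first. -/
def IsDrawnEdge {V : Type*} (G : SimpleGraph V) (A B : Set V) (e : V × V) : Prop :=
  e.1 ∈ A ∧ e.2 ∈ B ∧ G.Adj e.1 e.2

/-- Two edges (drawn as straight segments) cross. -/
def Crosses {V : Type*} (x : V → ℝ) (e f : V × V) : Prop :=
  (x e.1 - x f.1) * (x e.2 - x f.2) < 0

/-- A `k`-crossing: a set of `k` pairwise crossing edges. -/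
def IsKCrossing {V : Type*} (G : SimpleGraph V) (A B : Set V) (x : V → ℝ)
    (k : ℕ) (S : Finset (V × V)) : Prop :=
  S.card = k ∧ (∀ e ∈ S, IsDrawnEdge G A B e) ∧
    ∀ e ∈ S, ∀ f ∈ S, e ≠ f → Crosses x e f

/-- A set of edges of `G` no two of which share a vertex. -/
def IsDrawnMatching {V : Type*} (G : SimpleGraph V) (A B : Set V)
    (S : Finset (V × V)) : Prop :=
  (∀ e ∈ S, IsDrawnEdge G A B e) ∧
    ∀ e ∈ S, ∀ f ∈ S, e ≠ f →
      e.1 ≠ f.1 ∧ e.1 ≠ f.2 ∧ e.2 ≠ f.1 ∧ e.2 ≠ f.2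

/-- A set of edges is non-crossing if no two of them cross. -/
def NonCrossing {V : Type*} (x : V → ℝ) (S : Finset (V × V)) : Prop :=
  ∀ e ∈ S, ∀ f ∈ S, ¬ Crosses x e f

/-- An `(s,t)`-crossing: a non-crossing `s`-matching `S` and a non-crossing
`t`-matching `T` such that every edge of `S` crosses every edge of `T`. -/
def IsSTCrossing {V : Type*} (G : SimpleGraph V) (A B : Set V) (x : V → ℝ)
    (s t : ℕ) (S T : Finset (V × V)) : Prop :=
  IsDrawnMatching G A B S ∧ IsDrawnMatching G A B T ∧
    S.card = s ∧ T.card = t ∧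
    NonCrossing x S ∧ NonCrossing x T ∧
    ∀ e ∈ S, ∀ f ∈ T, Crosses x e f

/-- `Bags` is a path-decomposition of `G`: the bags cover the vertices,
bags containing any given vertex are consecutive, and both endpoints of
every edge lie in a common bag. -/
def IsPathDecomp {V : Type*} (G : SimpleGraph V) {n : ℕ}
    (Bags : Fin n → Finset V) : Prop :=
  (∀ v, ∃ i, v ∈ Bags i) ∧
  (∀ i j l : Fin n, i ≤ j → j ≤ l → ∀ v, v ∈ Bags i → v ∈ Bags l → v ∈ Bags j) ∧
  (∀ u v, G.Adj u v → ∃ i, u ∈ Bags i ∧ v ∈ Bags i)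

/-- `G` has a path-decomposition of width at most `w`. -/
def PathwidthAtMost {V : Type*} (G : SimpleGraph V) (w : ℕ) : Prop :=
  ∃ (n : ℕ) (Bags : Fin n → Finset V),
    IsPathDecomp G Bags ∧ ∀ i, (Bags i).card ≤ w + 1

/-- The pathwidth of `G`: the minimum width of a path-decomposition of `G`. -/
noncomputable def pathwidth {V : Type*} (G : SimpleGraph V) : ℕ :=
  sInf {w | PathwidthAtMost G w}

/-- `G` is a caterpillar: a tree such that deleting the leaves
(degree-1 vertices) gives a (possibly empty) path. -/
def IsCaterpillar {V : Type*} (G : SimpleGraph V) : Prop :=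
  G.IsTree ∧
    (G.induce {v | (G.neighborSet v).ncard ≠ 1}).IsAcyclic ∧
    ({v | (G.neighborSet v).ncard ≠ 1} = (∅ : Set V) ∨
      (G.induce {v | (G.neighborSet v).ncard ≠ 1}).Connected) ∧
    ∀ v : {v | (G.neighborSet v).ncard ≠ 1},
      ((G.induce {v | (G.neighborSet v).ncard ≠ 1}).neighborSet v).ncard ≤ 2


section AuxOrientation

variable {V : Type*} (G : SimpleGraph V) (A B : Set V) (x : V → ℝ)

/-- Crossing is a symmetric relation. -/
lemma crosses_symm' {x' : V → ℝ} {e f : V × V} (h : Crosses x' e f) : Crosses x' f e := by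
  unfold Crosses at *; nlinarith

/-- The set of cardinalities of pairwise-crossing sets of drawn edges containing `e`
with all `A`-coordinates at most that of `e`. -/
def goodSet (e : V × V) : Set ℕ :=
  {n | ∃ S : Finset (V × V), S.card = n ∧ e ∈ S ∧
    (∀ f ∈ S, IsDrawnEdge G A B f ∧ x f.1 ≤ x e.1) ∧
    ∀ f ∈ S, ∀ g ∈ S, f ≠ g → Crosses x f g}

noncomputable def edgeLevel (e : V × V) : ℕ := sSup (goodSet G A B x e)

variable {G A B x}

lemma goodSet_le {k : ℕ} (hk : ¬ ∃ S, IsKCrossing G A B x (k + 1) S)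
    {e : V × V} {n : ℕ} (hn : n ∈ goodSet G A B x e) : n ≤ k := by
  obtain ⟨S, hcard, -, hdrawn, hcross⟩ := hn
  by_contra hgt
  push_neg at hgt
  obtain ⟨T, hTS, hTcard⟩ := Finset.exists_subset_card_eq (s := S) (n := k + 1) (by omega)
  exact hk ⟨T, hTcard, fun f hf => (hdrawn f (hTS hf)).1,
    fun f hf g hg hfg => hcross f (hTS hf) g (hTS hg) hfg⟩

lemma goodSet_bdd {k : ℕ} (hk : ¬ ∃ S, IsKCrossing G A B x (k + 1) S)
    (e : V × V) : BddAbove (goodSet G A B x e) :=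
  ⟨k, fun _ hn => goodSet_le hk hn⟩

lemma one_mem_goodSet {e : V × V} (he : IsDrawnEdge G A B e) :
    1 ∈ goodSet G A B x e := by
  refine ⟨{e}, Finset.card_singleton e, Finset.mem_singleton_self e, ?_, ?_⟩
  · intro f hf; rw [Finset.mem_singleton] at hf; subst hf; exact ⟨he, le_refl _⟩
  · intro f hf g hg hfg
    rw [Finset.mem_singleton] at hf hg; subst hf; subst hg; exact absurd rfl hfg

lemma one_le_edgeLevel {k : ℕ} (hk : ¬ ∃ S, IsKCrossing G A B x (k + 1) S)
    {e : V × V} (he : IsDrawnEdge G A B e) : 1 ≤ edgeLevel G A B x e :=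
  le_csSup (goodSet_bdd hk e) (one_mem_goodSet he)

lemma edgeLevel_le {k : ℕ} (hk : ¬ ∃ S, IsKCrossing G A B x (k + 1) S)
    {e : V × V} (he : IsDrawnEdge G A B e) : edgeLevel G A B x e ≤ k := by
  have hmem := Nat.sSup_mem ⟨1, one_mem_goodSet he⟩ (goodSet_bdd hk e)
  exact goodSet_le hk hmem

/-- The key monotonicity: if two drawn edges cross, the one with larger
`A`-coordinate has strictly larger level. -/
lemma edgeLevel_lt {k : ℕ} (hk : ¬ ∃ S, IsKCrossing G A B x (k + 1) S)
    {e f : V × V} (he : IsDrawnEdge G A B e) (hf : IsDrawnEdge G A B f)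
    (hc : Crosses x e f) (hlt : x e.1 < x f.1) :
    edgeLevel G A B x e < edgeLevel G A B x f := by
  classical
  have hmem := Nat.sSup_mem ⟨1, one_mem_goodSet he⟩ (goodSet_bdd hk e)
  obtain ⟨S, hcard, heS, hprop, hcross⟩ := hmem
  have hef2 : x f.2 < x e.2 := by
    by_contra h
    push_neg at h
    unfold Crosses at hc
    nlinarith
  have hfS : f ∉ S := by
    intro hfin
    have := (hprop f hfin).2
    linarith
  have hnew : S.card + 1 ∈ goodSet G A B x f := by
    refine ⟨insert f S, Finset.card_insert_of_notMem hfS, Finset.mem_insert_self f S, ?_, ?_⟩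
    · intro g hg
      rcases Finset.mem_insert.mp hg with rfl | hg
      · exact ⟨hf, le_refl _⟩
      · exact ⟨(hprop g hg).1, le_trans (hprop g hg).2 (le_of_lt hlt)⟩
    · have hgf : ∀ g ∈ S, Crosses x g f := by
        intro g hg
        by_cases hge : g = e
        · subst hge; exact hc
        · have hcge := hcross g hg e heS hge
          have hg1 : x g.1 ≤ x e.1 := (hprop g hg).2
          have hg1' : x g.1 < x e.1 := by
            rcases lt_or_eq_of_le hg1 with h | h
            · exact h
            · exfalso; unfold Crosses at hcge; rw [h] at hcge; nlinarith
          have hg2 : x e.2 < x g.2 := by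
            unfold Crosses at hcge
            by_contra h; push_neg at h; nlinarith
          unfold Crosses
          nlinarith
      intro p hp q hq hpq
      rcases Finset.mem_insert.mp hp with hpf | hp
      · rcases Finset.mem_insert.mp hq with hqf | hq
        · exact absurd (hpf.trans hqf.symm) hpq
        · rw [hpf]; exact crosses_symm' (hgf q hq)
      · rcases Finset.mem_insert.mp hq with hqf | hq
        · rw [hqf]; exact hgf p hp
        · exact hcross p hp q hq hpq
  have := le_csSup (goodSet_bdd hk f) hnew
  unfold edgeLevel
  omega

end AuxOrientation

theorem orientation_of_no_crossing {V : Type*} [Fintype V] (k : ℕ)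
    (G : SimpleGraph V) (A B : Set V) (x : V → ℝ)
    (hbip : IsBipartition G A B) (hdraw : IsTwoLayerDrawing A B x)
    (hk : ¬ ∃ S, IsKCrossing G A B x (k + 1) S) :
    ∃ D : V → V → Prop, (∀ u v, D u v → G.Adj u v) ∧
      (∀ u v, G.Adj u v → (D u v ↔ ¬ D v u)) ∧
      ∀ v, ({w | D v w}).ncard ≤ k := by
  classical
  have hdisj : ∀ z : V, z ∈ A → z ∈ B → False :=
    fun z hz hz' => Set.disjoint_left.mp hbip.1 hz hz'
  -- every vertex is in A or B
  have hcover : ∀ v : V, v ∈ A ∨ v ∈ B := by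
    intro v
    have : v ∈ A ∪ B := by rw [hbip.2.1]; trivial
    exact this
  -- drawn edge from adjacency
  have hdrawnAB : ∀ u v : V, G.Adj u v → u ∈ A → IsDrawnEdge G A B (u, v) := by
    intro u v huv hu
    rcases hbip.2.2 huv with ⟨_, hv⟩ | ⟨hu', _⟩
    · exact ⟨hu, hv, huv⟩
    · exact absurd hu' (fun h => hdisj u hu h)
  set L : V × V → ℕ := edgeLevel G A B x with hL
  -- maximality predicate
  set M : V → V → Prop := fun a b =>
    ∀ b', G.Adj a b' → L (a, b') = L (a, b) → x b' ≤ x b with hM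
  refine ⟨fun u v => G.Adj u v ∧ ((u ∈ A ∧ M u v) ∨ (v ∈ A ∧ ¬ M v u)), ?_, ?_, ?_⟩
  · intro u v h; exact h.1
  · -- orientation property
    intro u v huv
    rcases hbip.2.2 huv with ⟨hu, hv⟩ | ⟨hu, hv⟩
    · have h1 : (G.Adj u v ∧ ((u ∈ A ∧ M u v) ∨ (v ∈ A ∧ ¬ M v u))) ↔ M u v := by
        constructor
        · rintro ⟨-, ⟨-, h⟩ | ⟨hv', -⟩⟩
          · exact h
          · exact absurd hv' (fun h => hdisj v h hv)
        · intro h; exact ⟨huv, Or.inl ⟨hu, h⟩⟩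
      have h2 : (G.Adj v u ∧ ((v ∈ A ∧ M v u) ∨ (u ∈ A ∧ ¬ M u v))) ↔ ¬ M u v := by
        constructor
        · rintro ⟨-, ⟨hv', -⟩ | ⟨-, h⟩⟩
          · exact absurd hv' (fun h => hdisj v h hv)
          · exact h
        · intro h; exact ⟨huv.symm, Or.inr ⟨hu, h⟩⟩
      show (G.Adj u v ∧ ((u ∈ A ∧ M u v) ∨ (v ∈ A ∧ ¬ M v u))) ↔
        ¬(G.Adj v u ∧ ((v ∈ A ∧ M v u) ∨ (u ∈ A ∧ ¬ M u v)))
      rw [h1, h2, not_not]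
    · have h1 : (G.Adj u v ∧ ((u ∈ A ∧ M u v) ∨ (v ∈ A ∧ ¬ M v u))) ↔ ¬ M v u := by
        constructor
        · rintro ⟨-, ⟨hu', -⟩ | ⟨-, h⟩⟩
          · exact absurd hu' (fun h => hdisj u h hu)
          · exact h
        · intro h; exact ⟨huv, Or.inr ⟨hv, h⟩⟩
      have h2 : (G.Adj v u ∧ ((v ∈ A ∧ M v u) ∨ (u ∈ A ∧ ¬ M u v))) ↔ M v u := by
        constructor
        · rintro ⟨-, ⟨-, h⟩ | ⟨hu', -⟩⟩
          · exact h
          · exact absurd hu' (fun h => hdisj u h hu)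
        · intro h; exact ⟨huv.symm, Or.inl ⟨hv, h⟩⟩
      show (G.Adj u v ∧ ((u ∈ A ∧ M u v) ∨ (v ∈ A ∧ ¬ M v u))) ↔
        ¬(G.Adj v u ∧ ((v ∈ A ∧ M v u) ∨ (u ∈ A ∧ ¬ M u v)))
      rw [h1, h2]
  · -- outdegree bound
    intro v
    have hIcc : ((↑(Finset.Icc 1 k) : Set ℕ)).ncard = k := by
      rw [Set.ncard_coe_finset, Nat.card_Icc]; omega
    rcases hcover v with hv | hv
    · -- v ∈ A
      calc ({w | G.Adj v w ∧ ((v ∈ A ∧ M v w) ∨ (w ∈ A ∧ ¬ M w v))}).ncard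
          ≤ ((↑(Finset.Icc 1 k) : Set ℕ)).ncard := by
            apply Set.ncard_le_ncard_of_injOn (fun w => L (v, w))
            · intro w hw
              obtain ⟨hadj, -⟩ := hw
              have hdr := hdrawnAB v w hadj hv
              simp only [Finset.coe_Icc, Set.mem_Icc]
              exact ⟨one_le_edgeLevel hk hdr, edgeLevel_le hk hdr⟩
            · intro w hw w' hw' heq
              have heq' : L (v, w) = L (v, w') := heq
              obtain ⟨hadj, hor⟩ := hw
              obtain ⟨hadj', hor'⟩ := hw'
              have hMw : M v w := by
                rcases hor with ⟨-, h⟩ | ⟨hw', -⟩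
                · exact h
                · exact absurd hw'
                    (fun h => hdisj w h (hdrawnAB v w hadj hv).2.1)
              have hMw' : M v w' := by
                rcases hor' with ⟨-, h⟩ | ⟨hw'', -⟩
                · exact h
                · exact absurd hw''
                    (fun h => hdisj w' h (hdrawnAB v w' hadj' hv).2.1)
              have h1 := hMw w' hadj' heq'.symm
              have h2 := hMw' w hadj heq'
              exact hdraw.2 (hdrawnAB v w hadj hv).2.1 (hdrawnAB v w' hadj' hv).2.1
                (le_antisymm h2 h1)
        _ = k := hIcc
    · -- v ∈ B
      have key : ∀ w w' : V, x w < x w' →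
          (G.Adj v w ∧ w ∈ A ∧ ¬ M w v) → (G.Adj v w' ∧ w' ∈ A ∧ ¬ M w' v) →
          L (w, v) = L (w', v) → False := by
        intro w w' hxlt ⟨hadj, hwA, hnM⟩ ⟨hadj', hw'A, _⟩ heq
        have hnM' : ∃ b', G.Adj w b' ∧ L (w, b') = L (w, v) ∧ x v < x b' := by
          by_contra hcon
          push_neg at hcon
          exact hnM (fun b' hb hlvl => hcon b' hb hlvl)
        obtain ⟨b', hb'adj, hb'lvl, hb'gt⟩ := hnM'
        have hdr1 : IsDrawnEdge G A B (w, b') := hdrawnAB w b' hb'adj hwA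
        have hdr2 : IsDrawnEdge G A B (w', v) := hdrawnAB w' v hadj'.symm hw'A
        have hcross : Crosses x (w, b') (w', v) := by
          unfold Crosses; simp only; nlinarith
        have hlt2 : L (w, b') < L (w', v) :=
          edgeLevel_lt hk hdr1 hdr2 hcross (by simpa using hxlt)
        omega
      calc ({w | G.Adj v w ∧ ((v ∈ A ∧ M v w) ∨ (w ∈ A ∧ ¬ M w v))}).ncard
          ≤ ((↑(Finset.Icc 1 k) : Set ℕ)).ncard := by
            apply Set.ncard_le_ncard_of_injOn (fun w => L (w, v))
            · intro w hw
              obtain ⟨hadj, hor⟩ := hw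
              have hwA : w ∈ A := by
                rcases hor with ⟨hv', -⟩ | ⟨h, -⟩
                · exact absurd hv' (fun h => hdisj v h hv)
                · exact h
              have hdr := hdrawnAB w v hadj.symm hwA
              simp only [Finset.coe_Icc, Set.mem_Icc]
              exact ⟨one_le_edgeLevel hk hdr, edgeLevel_le hk hdr⟩
            · intro w hw w' hw' heq
              have heq' : L (w, v) = L (w', v) := heq
              obtain ⟨hadj, hor⟩ := hw
              obtain ⟨hadj', hor'⟩ := hw'
              have hgood : ∀ z, G.Adj v z →
                  ((v ∈ A ∧ M v z) ∨ (z ∈ A ∧ ¬ M z v)) → z ∈ A ∧ ¬ M z v := by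
                intro z hz hor
                rcases hor with ⟨hv', -⟩ | h
                · exact absurd hv' (fun h => hdisj v h hv)
                · exact h
              have h1 := hgood w hadj hor
              have h2 := hgood w' hadj' hor'
              by_contra hne
              have hxne : x w ≠ x w' := fun h => hne (hdraw.1 h1.1 h2.1 h)
              rcases lt_or_gt_of_ne hxne with hlt | hgt
              · exact absurd (key w w' hlt ⟨hadj, h1⟩ ⟨hadj', h2⟩ heq') id
              · exact absurd (key w' w hgt ⟨hadj', h2⟩ ⟨hadj, h1⟩ heq'.symm) id
        _ = k := hIcc
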